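/- arXiv:dg-ga/9702019 — 5 statements merged into one kernel-verified Lean document; each statement's English description precedes it below -/
import Mathlib

section
/- Let (M,g) be a 4-dimensional Riemannian manifold whose Ricci tensor ρ satisfies ∇_X ρ (Y,Z) = (2/9) X(s) g(Y,Z) + (1/18) Y(s) g(X,Z) + (1/18) Z(s) g(X,Y) for all vector fields X,Y,Z, where s is the scalar curvature. Then for any orthonormal vectors X,Y,Z,U in a tangent space, (ρ(Y,Y)−ρ(Z,Z))·(∇_X ρ)(Y,Z) + ((∇_X ρ)(Z,Z)−(∇_X ρ)(Y,Y))·ρ(Y,Z) + ρ(Y,U)(∇_X ρ)(Z,U) − ρ(Z,U)(∇_X ρ)(Y,U) = 0. -/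
open scoped RealInnerProductSpace

theorem qSpace_apply_of_inner_eq_zero {E : Type*} [NormedAddCommGroup E] [InnerProductSpace ℝ E]
    {Dρ : E → E → E → ℝ} {Ds : E → ℝ}
    (h : ∀ X Y Z, Dρ X Y Z =
      (2/9) * Ds X * ⟪Y, Z⟫ + (1/18) * Ds Y * ⟪X, Z⟫ + (1/18) * Ds Z * ⟪X, Y⟫)
    {X Y Z : E} (hXY : ⟪X, Y⟫ = 0) (hXZ : ⟪X, Z⟫ = 0) :
    Dρ X Y Z = (2/9) * Ds X * ⟪Y, Z⟫ := by
  rw [h, hXY, hXZ]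
  ring

theorem stmt0_general
    (ρ : EuclideanSpace ℝ (Fin 4) → EuclideanSpace ℝ (Fin 4) → ℝ)
    (Dρ : EuclideanSpace ℝ (Fin 4) → EuclideanSpace ℝ (Fin 4) → EuclideanSpace ℝ (Fin 4) → ℝ)
    (Ds : EuclideanSpace ℝ (Fin 4) → ℝ)
    (h : ∀ X Y Z, Dρ X Y Z =
      (2/9) * Ds X * ⟪Y, Z⟫ + (1/18) * Ds Y * ⟪X, Z⟫ + (1/18) * Ds Z * ⟪X, Y⟫)
    (X Y Z U : EuclideanSpace ℝ (Fin 4))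
    (hYY : ⟪Y, Y⟫ = 1) (hZZ : ⟪Z, Z⟫ = 1)
    (hXY : ⟪X, Y⟫ = 0) (hXZ : ⟪X, Z⟫ = 0) (hXU : ⟪X, U⟫ = 0)
    (hYZ : ⟪Y, Z⟫ = 0) (hYU : ⟪Y, U⟫ = 0) (hZU : ⟪Z, U⟫ = 0) :
    (ρ Y Y - ρ Z Z) * Dρ X Y Z + (Dρ X Z Z - Dρ X Y Y) * ρ Y Z
      + ρ Y U * Dρ X Z U - ρ Z U * Dρ X Y U = 0 := by
  -- On `X⟂`, `∇_X ρ` is the multiple `(2/9) X(s)` of `g`, so it commutes with `ρ` there.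
  have hD := fun {V W} => qSpace_apply_of_inner_eq_zero h (X := X) (Y := V) (Z := W)
  rw [hD hXY hXZ, hD hXZ hXZ, hD hXY hXY, hD hXZ hXU, hD hXY hXU, hYZ, hYY, hZZ, hYU, hZU]
  ring

/-- pointwise form. On a 4-dimensional inner product (tangent) space,
if the covariant derivative `Dρ` of the Ricci tensor `ρ` satisfies the Q-space identity
`(∇_X ρ)(Y,Z) = (2/9) X(s) g(Y,Z) + (1/18) Y(s) g(X,Z) + (1/18) Z(s) g(X,Y)`
(where `Ds` is the differential of the scalar curvature), then for any orthonormal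
vectors X, Y, Z, U the P-space commutation identity holds. -/
theorem stmt0
    (ρ : EuclideanSpace ℝ (Fin 4) → EuclideanSpace ℝ (Fin 4) → ℝ)
    (Dρ : EuclideanSpace ℝ (Fin 4) → EuclideanSpace ℝ (Fin 4) → EuclideanSpace ℝ (Fin 4) → ℝ)
    (Ds : EuclideanSpace ℝ (Fin 4) → ℝ)
    (h : ∀ X Y Z, Dρ X Y Z =
      (2/9) * Ds X * ⟪Y, Z⟫ + (1/18) * Ds Y * ⟪X, Z⟫ + (1/18) * Ds Z * ⟪X, Y⟫)
    (X Y Z U : EuclideanSpace ℝ (Fin 4))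
    (hXX : ⟪X, X⟫ = 1) (hYY : ⟪Y, Y⟫ = 1) (hZZ : ⟪Z, Z⟫ = 1) (hUU : ⟪U, U⟫ = 1)
    (hXY : ⟪X, Y⟫ = 0) (hXZ : ⟪X, Z⟫ = 0) (hXU : ⟪X, U⟫ = 0)
    (hYZ : ⟪Y, Z⟫ = 0) (hYU : ⟪Y, U⟫ = 0) (hZU : ⟪Z, U⟫ = 0) :
    (ρ Y Y - ρ Z Z) * Dρ X Y Z + (Dρ X Z Z - Dρ X Y Y) * ρ Y Z
      + ρ Y U * Dρ X Z U - ρ Z U * Dρ X Y U = 0 :=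
  stmt0_general ρ Dρ Ds h X Y Z U hYY hZZ hXY hXZ hXU hYZ hYU hZU
end

section
/- Let ν_2, ν_3, ν_4 be smooth real functions of one variable x satisfying (ν_{i}' + ν_{j}' − ν_{k}')ν_{k}' − ν_{k}'' = 0 for all permutations (i,j,k) of (2,3,4). Then (ν_2'ν_3')' = (ν_2'ν_4')' = (ν_3'ν_4')' = 2ν_2'ν_3'ν_4'. -/
private lemma deriv_diff {f : ℝ → ℝ} (hf : ContDiff ℝ (⊤ : ℕ∞) f) :
    Differentiable ℝ (deriv f) :=
  (contDiff_infty_iff_deriv.mp (hf.of_le (by simp))).2.differentiable (by simp)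

private lemma prod_deriv {f g : ℝ → ℝ} (hf : ContDiff ℝ (⊤ : ℕ∞) f) (hg : ContDiff ℝ (⊤ : ℕ∞) g) (x : ℝ) :
    deriv (fun t => deriv f t * deriv g t) x =
      deriv (deriv f) x * deriv g x + deriv f x * deriv (deriv g) x := by
  exact deriv_mul ((deriv_diff hf) x) ((deriv_diff hg) x)

/-- if smooth functions `ν₂, ν₃, ν₄` of one variable satisfy
`(ν_i' + ν_j' − ν_k')ν_k' − ν_k'' = 0` for all permutations `(i,j,k)` of `(2,3,4)`, then
`(ν₂'ν₃')' = (ν₂'ν₄')' = (ν₃'ν₄')' = 2ν₂'ν₃'ν₄'`. -/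
theorem stmt5 (ν2 ν3 ν4 : ℝ → ℝ)
    (h2 : ContDiff ℝ (⊤ : ℕ∞) ν2) (h3 : ContDiff ℝ (⊤ : ℕ∞) ν3) (h4 : ContDiff ℝ (⊤ : ℕ∞) ν4)
    (e2 : ∀ x, (deriv ν3 x + deriv ν4 x - deriv ν2 x) * deriv ν2 x - deriv (deriv ν2) x = 0)
    (e3 : ∀ x, (deriv ν2 x + deriv ν4 x - deriv ν3 x) * deriv ν3 x - deriv (deriv ν3) x = 0)
    (e4 : ∀ x, (deriv ν2 x + deriv ν3 x - deriv ν4 x) * deriv ν4 x - deriv (deriv ν4) x = 0) :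
    ∀ x,
      deriv (fun t => deriv ν2 t * deriv ν3 t) x = 2 * (deriv ν2 x * deriv ν3 x * deriv ν4 x) ∧
      deriv (fun t => deriv ν2 t * deriv ν4 t) x = 2 * (deriv ν2 x * deriv ν3 x * deriv ν4 x) ∧
      deriv (fun t => deriv ν3 t * deriv ν4 t) x = 2 * (deriv ν2 x * deriv ν3 x * deriv ν4 x) := by
  intro x
  have E2 := e2 x; have E3 := e3 x; have E4 := e4 x
  refine ⟨?_, ?_, ?_⟩
  · rw [prod_deriv h2 h3]; linear_combination (-(deriv ν3 x)) * E2 - deriv ν2 x * E3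
  · rw [prod_deriv h2 h4]; linear_combination (-(deriv ν4 x)) * E2 - deriv ν2 x * E4
  · rw [prod_deriv h3 h4]; linear_combination (-(deriv ν4 x)) * E3 - deriv ν3 x * E4
end

section
/- Functions of the form μ₁² = 1, μ₂² = η(x₁), μ₃² = η(x₁)ψ(x₂), μ₄² = η(x₁)φ(x₂) (with η, ψ, φ smooth positive functions of one variable) solve the Stäckel system: setting ν_i = (1/2) log μ_i², the equations ν_{i,j}ν_{j,k} + ν_{i,k}ν_{k,j} − ν_{i,j}ν_{i,k} = 0, ν_{i,jk} = 0, and ν_{i,ij} + 2ν_{i,j}ν_{j,i} = 0 hold for all distinct i,j,k ∈ {1,2,3,4}. -/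
set_option maxHeartbeats 1000000

/-- Partial derivative in the `j`-th coordinate direction of a function on ℝ⁴. -/
noncomputable def pd (j : Fin 4) (f : (Fin 4 → ℝ) → ℝ) (x : Fin 4 → ℝ) : ℝ :=
  deriv (fun t => f (Function.update x j t)) (x j)

/-- `ν_i = log μ_i = (1/2) log μ_i²` for a diagonal metric `g = Σ μ_i² dx_i²`. -/
noncomputable def nuF (μsq : Fin 4 → (Fin 4 → ℝ) → ℝ) (i : Fin 4) (y : Fin 4 → ℝ) : ℝ :=
  Real.log (μsq i y) / 2

/-- Matrix of first partial derivatives `ν_{i,j}` for the explicit solution. -/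
noncomputable def Dm (η ψ φ : ℝ → ℝ) (i j : Fin 4) : (Fin 4 → ℝ) → ℝ :=
  if j = 0 then
    (if i = 0 then 0 else fun x => deriv (fun s => Real.log (η s) / 2) (x 0))
  else if j = 1 then
    (if i = 2 then fun x => deriv (fun s => Real.log (ψ s) / 2) (x 1)
     else if i = 3 then fun x => deriv (fun s => Real.log (φ s) / 2) (x 1)
     else 0)
  else 0

lemma pd_const (j : Fin 4) (c : ℝ) (x : Fin 4 → ℝ) : pd j (fun _ => c) x = 0 := by
  simp [pd]

lemma pd_apply_ne (j m : Fin 4) (h : m ≠ j) (g : ℝ → ℝ) (x : Fin 4 → ℝ) :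
    pd j (fun y => g (y m)) x = 0 := by
  unfold pd
  have : (fun t => g (Function.update x j t m)) = fun _ => g (x m) := by
    funext t; rw [Function.update_of_ne h]
  rw [this]; simp

/-- the functions `μ₁² = 1`, `μ₂² = η(x₁)`, `μ₃² = η(x₁)ψ(x₂)`,
`μ₄² = η(x₁)φ(x₂)` (η, ψ, φ smooth and positive) solve the Stäckel system:
with `ν_i = (1/2) log μ_i²`, the equations
`ν_{i,j}ν_{j,k} + ν_{i,k}ν_{k,j} − ν_{i,j}ν_{i,k} = 0`, `ν_{i,jk} = 0` and
`ν_{i,ij} + 2ν_{i,j}ν_{j,i} = 0` hold for all distinct indices. -/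
theorem stmt10 (η ψ φ : ℝ → ℝ)
    (hη : ContDiff ℝ (⊤ : ℕ∞) η) (hψ : ContDiff ℝ (⊤ : ℕ∞) ψ) (hφ : ContDiff ℝ (⊤ : ℕ∞) φ)
    (hηpos : ∀ t, 0 < η t) (hψpos : ∀ t, 0 < ψ t) (hφpos : ∀ t, 0 < φ t)
    (μsq : Fin 4 → (Fin 4 → ℝ) → ℝ)
    (h1 : ∀ x, μsq 0 x = 1)
    (h2 : ∀ x, μsq 1 x = η (x 0))
    (h3 : ∀ x, μsq 2 x = η (x 0) * ψ (x 1))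
    (h4 : ∀ x, μsq 3 x = η (x 0) * φ (x 1)) :
    ∀ x : Fin 4 → ℝ, ∀ i j k : Fin 4, i ≠ j → j ≠ k → i ≠ k →
      (pd j (nuF μsq i) x * pd k (nuF μsq j) x + pd k (nuF μsq i) x * pd j (nuF μsq k) x
        - pd j (nuF μsq i) x * pd k (nuF μsq i) x = 0) ∧
      pd k (pd j (nuF μsq i)) x = 0 ∧
      pd j (pd i (nuF μsq i)) x + 2 * pd j (nuF μsq i) x * pd i (nuF μsq j) x = 0 := by
  have nu0 : nuF μsq 0 = fun _ => (0:ℝ) := funext fun y => by simp [nuF, h1]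
  have nu1 : nuF μsq 1 = fun y => Real.log (η (y 0)) / 2 :=
    funext fun y => by simp [nuF, h2]
  have nu2 : nuF μsq 2 = fun y => Real.log (η (y 0)) / 2 + Real.log (ψ (y 1)) / 2 :=
    funext fun y => by
      simp [nuF, h3, Real.log_mul (hηpos (y 0)).ne' (hψpos (y 1)).ne', add_div]
  have nu3 : nuF μsq 3 = fun y => Real.log (η (y 0)) / 2 + Real.log (φ (y 1)) / 2 :=
    funext fun y => by
      simp [nuF, h4, Real.log_mul (hηpos (y 0)).ne' (hφpos (y 1)).ne', add_div]
  -- update facts for the coordinates 0 and 1 against any direction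
  have u01 : ∀ (x : Fin 4 → ℝ) (t : ℝ), Function.update x (0:Fin 4) t 1 = x 1 :=
    fun x t => Function.update_of_ne (by decide) t x
  have u10 : ∀ (x : Fin 4 → ℝ) (t : ℝ), Function.update x (1:Fin 4) t 0 = x 0 :=
    fun x t => Function.update_of_ne (by decide) t x
  have u20 : ∀ (x : Fin 4 → ℝ) (t : ℝ), Function.update x (2:Fin 4) t 0 = x 0 :=
    fun x t => Function.update_of_ne (by decide) t x
  have u21 : ∀ (x : Fin 4 → ℝ) (t : ℝ), Function.update x (2:Fin 4) t 1 = x 1 :=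
    fun x t => Function.update_of_ne (by decide) t x
  have u30 : ∀ (x : Fin 4 → ℝ) (t : ℝ), Function.update x (3:Fin 4) t 0 = x 0 :=
    fun x t => Function.update_of_ne (by decide) t x
  have u31 : ∀ (x : Fin 4 → ℝ) (t : ℝ), Function.update x (3:Fin 4) t 1 = x 1 :=
    fun x t => Function.update_of_ne (by decide) t x
  -- first partials
  have key : ∀ i j : Fin 4, pd j (nuF μsq i) = Dm η ψ φ i j := by
    intro i j
    fin_cases i <;> fin_cases j <;>
      simp only [Fin.zero_eta, Fin.mk_one, Fin.reduceFinMk] <;>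
      simp only [nu0, nu1, nu2, nu3, Dm, Fin.reduceEq, reduceIte] <;>
      funext x <;>
      simp only [pd, Function.update_self, u01, u10, u20, u21, u30, u31, Pi.zero_apply] <;>
      first
        | simp
        | rw [deriv_add_const]
        | rw [deriv_const_add]
        | rfl
  have pd_zero_fun : ∀ (j : Fin 4) (x : Fin 4 → ℝ), pd j (0 : (Fin 4 → ℝ) → ℝ) x = 0 := by
    intro j x; simp [pd]
  have Dm_diag : ∀ i : Fin 4, Dm η ψ φ i i = 0 := by
    intro i
    fin_cases i <;>
      simp only [Fin.zero_eta, Fin.mk_one, Fin.reduceFinMk] <;>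
      simp only [Dm, Fin.reduceEq, reduceIte]
  have pdDm : ∀ (i j k : Fin 4) (x : Fin 4 → ℝ), k ≠ j → pd k (Dm η ψ φ i j) x = 0 := by
    intro i j k x hkj
    fin_cases i <;> fin_cases j <;>
      simp only [Fin.zero_eta, Fin.mk_one, Fin.reduceFinMk] at hkj ⊢ <;>
      simp only [Dm, Fin.reduceEq, reduceIte] <;>
      first
        | exact pd_zero_fun _ _
        | exact pd_apply_ne _ _ (Ne.symm hkj) _ _
  intro x i j k hij hjk hik
  have kx : ∀ i j : Fin 4, pd j (nuF μsq i) x = Dm η ψ φ i j x :=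
    fun i j => congrFun (key i j) x
  refine ⟨?_, ?_, ?_⟩
  · simp only [kx]
    fin_cases i <;> fin_cases j <;> fin_cases k <;>
      simp only [Fin.zero_eta, Fin.mk_one, Fin.reduceFinMk] at hij hjk hik ⊢ <;>
      first
        | exact absurd rfl hij
        | exact absurd rfl hjk
        | exact absurd rfl hik
        | (simp only [Dm, Fin.reduceEq, reduceIte, Pi.zero_apply, mul_zero, zero_mul,
             add_zero, zero_add, sub_self, sub_zero, zero_sub, neg_eq_zero]; try ring)
  · rw [key]
    exact pdDm i j k x (Ne.symm hjk)
  · rw [key, Dm_diag, pd_zero_fun, kx, kx]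
    fin_cases i <;> fin_cases j <;>
      simp only [Fin.zero_eta, Fin.mk_one, Fin.reduceFinMk] at hij ⊢ <;>
      first
        | exact absurd rfl hij
        | (simp only [Dm, Fin.reduceEq, reduceIte, Pi.zero_apply, mul_zero, zero_mul,
             add_zero, zero_add])
end

section
/- Suppose a 4-dimensional locally conformal flat Riemannian manifold has Ricci eigenvalues satisfying r₁ = r₂ ≠ r₃ = r₄ on an open set, and is a P-space there (so equations (7): E_i(r_k) = E_i(r_j), (8): E_i(r_i) = 3(E_i(r_k) − 2(∇_kρ)_{ki}), and (9): (r_i − r_l)(E_i(r_i) − E_i(r_k) − 2(∇_kρ)_{ki}) = 0 hold for all distinct indices). Then all four Ricci eigenvalues are locally constant. -/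
/-!
Fix `i` and let `j` be the index whose eigenvalue agrees with `r i`, and `k, l` the other
two. Since `r i ≠ r l`, equation (9) gives `E_i(r_i) − E_i(r_k) = 2(∇_kρ)_{ki}`, and (8)
then reads `E_i(r_i) = 3(2 E_i(r_k) − E_i(r_i))`. But `E_i(r_i) = E_i(r_j) = E_i(r_k)` by
the eigenvalue coincidence and (7), so `4x = 6x` and all of `E_i(r_·)` vanish.
-/

lemma Fin.eq_or_eq_or_eq_or_eq_of_nodup {i j k l : Fin 4} (hd : [i, j, k, l].Nodup)
    (m : Fin 4) : m = i ∨ m = j ∨ m = k ∨ m = l := by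
  revert i j k l m
  decide

section PSpace

variable {M : Type*} {r : Fin 4 → M → ℝ} {dr Dρ : Fin 4 → Fin 4 → M → ℝ}

lemma frameDeriv_eq_zero_of_eigenvalue_partner
    (h7 : ∀ i j k l : Fin 4, i ≠ j → i ≠ k → i ≠ l → j ≠ k → j ≠ l → k ≠ l →
      ∀ p, dr i k p = dr i j p)
    (h8 : ∀ i j k l : Fin 4, i ≠ j → i ≠ k → i ≠ l → j ≠ k → j ≠ l → k ≠ l →
      ∀ p, dr i i p = 3 * (dr i k p - 2 * Dρ k i p))
    (h9 : ∀ i j k l : Fin 4, i ≠ j → i ≠ k → i ≠ l → j ≠ k → j ≠ l → k ≠ l →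
      ∀ p, (r i p - r l p) * (dr i i p - dr i k p - 2 * Dρ k i p) = 0)
    {i j k l : Fin 4} (hd : [i, j, k, l].Nodup) {p : M}
    (hpartner : dr i i p = dr i j p) (hgap : r i p ≠ r l p) (m : Fin 4) :
    dr i m p = 0 := by
  have hcover := Fin.eq_or_eq_or_eq_or_eq_of_nodup hd m
  simp only [List.nodup_cons, List.mem_cons, List.not_mem_nil, List.nodup_nil,
    not_or, and_true, not_false_eq_true] at hd
  obtain ⟨⟨hij, hik, hil⟩, ⟨hjk, hjl⟩, hkl⟩ := hd
  have hk : dr i k p = dr i j p := h7 i j k l hij hik hil hjk hjl hkl p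
  have hl : dr i l p = dr i j p := h7 i j l k hij hil hik hjl hjk (Ne.symm hkl) p
  have h9' : dr i i p - dr i k p - 2 * Dρ k i p = 0 :=
    (mul_eq_zero.mp (h9 i j k l hij hik hil hjk hjl hkl p)).resolve_left (sub_ne_zero.mpr hgap)
  have hi : dr i i p = 0 := by linarith [h8 i j k l hij hik hil hjk hjl hkl p]
  obtain rfl | rfl | rfl | rfl := hcover <;> linarith

end PSpace

/-- abstract frame formulation of Case C. `r i` are the Ricci eigenvalue
functions on `M` in an orthonormal eigenframe `E_0,…,E_3`, `dr i j` stands for the frame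
derivative `E_i(r_j)` (so equal eigenvalue functions have equal derivatives), and
`Dρ k i = (∇_{E_k}ρ)(E_k,E_i)`. If `r₁ = r₂ ≠ r₃ = r₄` and the P-space equations
(7) `E_i(r_k) = E_i(r_j)`, (8) `E_i(r_i) = 3(E_i(r_k) − 2(∇_kρ)_{ki})` and
(9) `(r_i − r_l)(E_i(r_i) − E_i(r_k) − 2(∇_kρ)_{ki}) = 0` hold for all distinct indices,
then all four Ricci eigenvalues are (locally) constant, i.e. all frame derivatives vanish. -/
theorem stmt15 {M : Type*} (r : Fin 4 → M → ℝ)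
    (dr : Fin 4 → Fin 4 → M → ℝ) (Dρ : Fin 4 → Fin 4 → M → ℝ)
    (hr01 : r 0 = r 1) (hr23 : r 2 = r 3) (hne : ∀ p, r 0 p ≠ r 2 p)
    (hdr01 : ∀ i, dr i 0 = dr i 1) (hdr23 : ∀ i, dr i 2 = dr i 3)
    (h7 : ∀ i j k l : Fin 4, i ≠ j → i ≠ k → i ≠ l → j ≠ k → j ≠ l → k ≠ l →
      ∀ p, dr i k p = dr i j p)
    (h8 : ∀ i j k l : Fin 4, i ≠ j → i ≠ k → i ≠ l → j ≠ k → j ≠ l → k ≠ l →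
      ∀ p, dr i i p = 3 * (dr i k p - 2 * Dρ k i p))
    (h9 : ∀ i j k l : Fin 4, i ≠ j → i ≠ k → i ≠ l → j ≠ k → j ≠ l → k ≠ l →
      ∀ p, (r i p - r l p) * (dr i i p - dr i k p - 2 * Dρ k i p) = 0) :
    ∀ i j : Fin 4, ∀ p, dr i j p = 0 := by
  intro i m p
  have h01 : r 0 p = r 1 p := congrFun hr01 p
  have h23 : r 2 p = r 3 p := congrFun hr23 p
  have h02 : r 0 p ≠ r 2 p := hne p
  fin_cases i
  · exact frameDeriv_eq_zero_of_eigenvalue_partner h7 h8 h9 (j := 1) (k := 3) (l := 2)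
      (by decide) (congrFun (hdr01 0) p) h02 m
  · exact frameDeriv_eq_zero_of_eigenvalue_partner h7 h8 h9 (j := 0) (k := 3) (l := 2)
      (by decide) (congrFun (hdr01 1) p).symm (h01 ▸ h02) m
  · exact frameDeriv_eq_zero_of_eigenvalue_partner h7 h8 h9 (j := 3) (k := 1) (l := 0)
      (by decide) (congrFun (hdr23 2) p) h02.symm m
  · exact frameDeriv_eq_zero_of_eigenvalue_partner h7 h8 h9 (j := 2) (k := 1) (l := 0)
      (by decide) (congrFun (hdr23 3) p).symm (h23 ▸ h02.symm) m
end

section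
/- Let ψ₃ = ψ₄ = ψ where ψ is a smooth function of one variable, and suppose that for all x₃ ≠ x₄ in an interval (avoiding 0 and b), (1/(x₃(x₃−b)))(−ψ'(x₃) + ψ(x₃)(1/x₃ + 2/(x₃−x₄) + 1/(x₃−b))) + (1/(x₄(x₄−b)))(−ψ'(x₄) + ψ(x₄)(1/x₄ + 2/(x₄−x₃) + 1/(x₄−b))) = 0. Then the function x ↦ ψ(x)/(x(x−b)) is a polynomial of degree at most 2; equivalently ψ(x) = (x−b)(a₃x³ + a₂x² + a₁x) for constants a₁, a₂, a₃. -/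
set_option maxHeartbeats 1600000 in
/-- if `ψ` is smooth on an interval avoiding `0` and `b ≠ 0` and satisfies,
for all distinct `x₃, x₄` in the interval,
`(1/(x₃(x₃−b)))(−ψ'(x₃) + ψ(x₃)(1/x₃ + 2/(x₃−x₄) + 1/(x₃−b)))
 + (1/(x₄(x₄−b)))(−ψ'(x₄) + ψ(x₄)(1/x₄ + 2/(x₄−x₃) + 1/(x₄−b))) = 0`,
then `ψ(x) = (x−b)(a₃x³ + a₂x² + a₁x)` for some constants `a₁, a₂, a₃`. -/
theorem stmt19 (b : ℝ) (hb : b ≠ 0) (p q : ℝ) (ψ : ℝ → ℝ)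
    (hψ : ContDiffOn ℝ (⊤ : ℕ∞) ψ (Set.Ioo p q))
    (havoid : ∀ x ∈ Set.Ioo p q, x ≠ 0 ∧ x ≠ b)
    (heq : ∀ x3 ∈ Set.Ioo p q, ∀ x4 ∈ Set.Ioo p q, x3 ≠ x4 →
      (1 / (x3 * (x3 - b))) *
        (-(deriv ψ x3) + ψ x3 * (1 / x3 + 2 / (x3 - x4) + 1 / (x3 - b)))
      + (1 / (x4 * (x4 - b))) *
        (-(deriv ψ x4) + ψ x4 * (1 / x4 + 2 / (x4 - x3) + 1 / (x4 - b))) = 0) :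
    ∃ a1 a2 a3 : ℝ, ∀ x ∈ Set.Ioo p q,
      ψ x = (x - b) * (a3 * x ^ 3 + a2 * x ^ 2 + a1 * x) := by
  by_cases hpq : p < q
  · obtain ⟨y, z, hymem, hzmem, hyz⟩ :
        ∃ y z : ℝ, y ∈ Set.Ioo p q ∧ z ∈ Set.Ioo p q ∧ y ≠ z := by
      refine ⟨p + (q - p) / 3, p + 2 * (q - p) / 3, ⟨by linarith, by linarith⟩,
        ⟨by linarith, by linarith⟩, by intro h; nlinarith [sub_eq_zero.mpr h]⟩
    have hyz' : y - z ≠ 0 := sub_ne_zero.mpr hyz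
    obtain ⟨hy0, hyb⟩ := havoid y hymem
    obtain ⟨hz0, hzb⟩ := havoid z hzmem
    have hyb' : y - b ≠ 0 := sub_ne_zero.mpr hyb
    have hzb' : z - b ≠ 0 := sub_ne_zero.mpr hzb
    set Gy := (1 / (y * (y - b))) * (-(deriv ψ y) + ψ y * (1 / y + 1 / (y - b))) with hGy
    set Gz := (1 / (z * (z - b))) * (-(deriv ψ z) + ψ z * (1 / z + 1 / (z - b))) with hGz
    set Py := ψ y / (y * (y - b)) with hPy
    set Pz := ψ z / (z * (z - b)) with hPz
    refine ⟨(-(Gy - Gz) * y * z - 2 * Py * z + 2 * Pz * y) / (2 * (y - z)),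
            ((Gy - Gz) * (y + z) + 2 * Py - 2 * Pz) / (2 * (y - z)),
            -(Gy - Gz) / (2 * (y - z)), ?_⟩
    intro x hx
    obtain ⟨hx0, hxb⟩ := havoid x hx
    have hxb' : x - b ≠ 0 := sub_ne_zero.mpr hxb
    rcases eq_or_ne x y with rfl | hxy
    · rw [hPy]; field_simp [hPy]
      ring
    rcases eq_or_ne x z with rfl | hxz
    · rw [hPz]; field_simp [hPz]
      ring
    have hxy' : x - y ≠ 0 := sub_ne_zero.mpr hxy
    have hxz' : x - z ≠ 0 := sub_ne_zero.mpr hxz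
    have hyx' : y - x ≠ 0 := sub_ne_zero.mpr (Ne.symm hxy)
    have hzx' : z - x ≠ 0 := sub_ne_zero.mpr (Ne.symm hxz)
    have h1 := heq x hx y hymem hxy
    have h2 := heq x hx z hzmem hxz
    have e1 : (1 / (y * (y - b))) *
        (-(deriv ψ y) + ψ y * (1 / y + 2 / (y - x) + 1 / (y - b)))
        = Gy - 2 * Py / (x - y) := by
      rw [hGy, hPy]; field_simp; ring
    have e2 : (1 / (z * (z - b))) *
        (-(deriv ψ z) + ψ z * (1 / z + 2 / (z - x) + 1 / (z - b)))
        = Gz - 2 * Pz / (x - z) := by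
      rw [hGz, hPz]; field_simp; ring
    rw [e1] at h1
    rw [e2] at h2
    have H1 : -(deriv ψ x) * x * (x - b) * (x - y)
        + ψ x * ((x - b) * (x - y) + 2 * x * (x - b) + x * (x - y))
        + Gy * x ^ 2 * (x - b) ^ 2 * (x - y) - 2 * Py * x ^ 2 * (x - b) ^ 2 = 0 := by
      linear_combination (norm := (field_simp; ring))
        (x ^ 2 * (x - b) ^ 2 * (x - y)) * h1
    have H2 : -(deriv ψ x) * x * (x - b) * (x - z)
        + ψ x * ((x - b) * (x - z) + 2 * x * (x - b) + x * (x - z))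
        + Gz * x ^ 2 * (x - b) ^ 2 * (x - z) - 2 * Pz * x ^ 2 * (x - b) ^ 2 = 0 := by
      linear_combination (norm := (field_simp; ring))
        (x ^ 2 * (x - b) ^ 2 * (x - z)) * h2
    have key : 2 * x * (x - b) * (y - z) * ψ x
        = x ^ 2 * (x - b) ^ 2 *
          (-(Gy - Gz) * (x - y) * (x - z) + 2 * Py * (x - z) - 2 * Pz * (x - y)) := by
      linear_combination (x - z) * H1 - (x - y) * H2
    linear_combination (norm := (field_simp; ring))
      (1 / (2 * x * (x - b) * (y - z))) * key
  · refine ⟨0, 0, 0, fun x hx => absurd hx ?_⟩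
    rw [Set.Ioo_eq_empty hpq]
    exact Set.notMem_empty x
end
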